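/- arXiv:1310.2573 — 4 statements merged into one kernel-verified Lean document; each statement's English description precedes it below -/
import Mathlib

section
/- For δ ≥ 2 and t > 0, the series p^{(Y)}(t, x, y) = Σ_{n≥0} [(1 − y²)^{δ/2 − 1} C_n^{(δ/2 − 1/2)}(x) C_n^{(δ/2 − 1/2)}(y) / ∫_{−1}^1 (1 − y²)^{δ/2 − 1} C_n^{(δ/2 − 1/2)}(y)² dy] · exp(−(n/2)(n + δ − 1) t) converges uniformly (in x, y) on [−1, 1]² . -/
open Filter Set Topology Polynomial

noncomputable section

/-- The Gegenbauer (ultraspherical) polynomial `C_n^{(α)}`, defined by the standard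
recurrence `C_0 = 1`, `C_1 = 2αx`, `n C_n = 2x(n + α − 1) C_{n−1} − (n + 2α − 2) C_{n−2}`. -/
def gegenbauer (α : ℝ) : ℕ → Polynomial ℝ
  | 0 => 1
  | 1 => Polynomial.C (2 * α) * Polynomial.X
  | n + 2 =>
      Polynomial.C (2 * ((n : ℝ) + 1 + α) / ((n : ℝ) + 2)) * Polynomial.X
          * gegenbauer α (n + 1)
        - Polynomial.C (((n : ℝ) + 2 * α) / ((n : ℝ) + 2)) * gegenbauer α n

/-! Weierstrass M-test with crude bounds exponential in `n`. The three-term recurrence gives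
`|C_n^{(α)}| ≤ (4α + 4)ⁿ` and `|C_n^{(α)}'| ≤ n (4α + 4)ⁿ` on `[-1, 1]`, and `C_n^{(α)}(1) ≥ 1`.
By the mean value theorem `C_n^{(α)} ≥ 1/2` on an interval of length `≍ (8α + 8)⁻ⁿ` below `1`,
so the normalising integral is at least exponentially small. The factor
`exp(-(n/2)(n + δ - 1)t) ≤ exp(-t n² / 2)` decays like a Gaussian in `n` and beats all of this. -/

open Real MeasureTheory

theorem le_intervalIntegral_of_le_on_subinterval {f : ℝ → ℝ} {a b c d m : ℝ} (hca : c ≤ a)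
    (hab : a ≤ b) (hbd : b ≤ d) (hf : IntervalIntegrable f volume c d)
    (hf₀ : ∀ x ∈ Icc c d, 0 ≤ f x) (hm : ∀ x ∈ Icc a b, m ≤ f x) :
    (b - a) * m ≤ ∫ x in c..d, f x := by
  calc (b - a) * m = ∫ _ in a..b, m := by simp
    _ ≤ ∫ x in a..b, f x :=
      intervalIntegral.integral_mono_on hab intervalIntegrable_const
        (hf.mono_set (by rw [uIcc_of_le (hca.trans (hab.trans hbd)), uIcc_of_le hab]; gcongr)) hm
    _ ≤ ∫ x in c..d, f x := intervalIntegral.integral_mono_interval hca hab hbd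
        ((ae_restrict_iff' measurableSet_Ioc).2
          (.of_forall fun x hx => hf₀ x (Ioc_subset_Icc_self hx))) hf

theorem summable_pow_mul_exp_neg_mul_sq (r : ℝ) {c : ℝ} (hc : 0 < c) :
    Summable fun n : ℕ => r ^ n * exp (-c * n ^ 2) := by
  set K := log (|r| + 1)
  have hK : exp (-K) = (|r| + 1)⁻¹ := by rw [exp_neg, exp_log (by positivity)]
  refine Summable.of_norm_bounded ((summable_geometric_of_lt_one (by positivity)
    ((div_lt_one (by positivity)).2 (lt_add_one |r|))).mul_left (exp (K ^ 2 / (4 * c)))) fun n => ?_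
  have hsq : -c * n ^ 2 ≤ K ^ 2 / (4 * c) + n * -K := by
    have : K ^ 2 / (4 * c) + n * -K - -c * n ^ 2 = (K - 2 * c * n) ^ 2 / (4 * c) := by
      field_simp; ring
    linarith [div_nonneg (sq_nonneg (K - 2 * c * n)) (by positivity : (0 : ℝ) ≤ 4 * c)]
  calc ‖r ^ n * exp (-c * n ^ 2)‖ = |r| ^ n * exp (-c * n ^ 2) := by
        rw [norm_mul, norm_pow, Real.norm_eq_abs, Real.norm_of_nonneg (exp_pos _).le]
    _ ≤ |r| ^ n * (exp (K ^ 2 / (4 * c)) * exp (-K) ^ n) := by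
        rw [← exp_nat_mul, ← exp_add]; gcongr
    _ = exp (K ^ 2 / (4 * c)) * (|r| / (|r| + 1)) ^ n := by
        rw [hK, div_eq_mul_inv |r|, mul_pow]; ring

theorem eval_gegenbauer_add_two (α : ℝ) (n : ℕ) (x : ℝ) :
    (gegenbauer α (n + 2)).eval x = 2 * ((n : ℝ) + 1 + α) / ((n : ℝ) + 2) * x
      * (gegenbauer α (n + 1)).eval x
      - ((n : ℝ) + 2 * α) / ((n : ℝ) + 2) * (gegenbauer α n).eval x := by
  simp [gegenbauer]

theorem derivative_eval_gegenbauer_add_two (α : ℝ) (n : ℕ) (x : ℝ) :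
    (gegenbauer α (n + 2)).derivative.eval x = 2 * ((n : ℝ) + 1 + α) / ((n : ℝ) + 2)
      * ((gegenbauer α (n + 1)).eval x + x * (gegenbauer α (n + 1)).derivative.eval x)
      - ((n : ℝ) + 2 * α) / ((n : ℝ) + 2) * (gegenbauer α n).derivative.eval x := by
  simp only [gegenbauer, derivative_sub, derivative_mul, derivative_C, derivative_X, eval_sub,
    eval_add, eval_mul, eval_C, eval_X, eval_zero, eval_one]
  ring

def gegenbauerNormSq (α : ℝ) (n : ℕ) : ℝ :=
  ∫ y in (-1 : ℝ)..1, (1 - y ^ 2) ^ (α - 1 / 2) * ((gegenbauer α n).eval y) ^ 2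

section Gegenbauer

variable {α : ℝ}

theorem gegenbauer_recurrence_coeffs_mem_Icc (hα : 0 ≤ α) (n : ℕ) :
    2 * ((n : ℝ) + 1 + α) / ((n : ℝ) + 2) ∈ Icc 0 (2 * α + 2) ∧
      ((n : ℝ) + 2 * α) / ((n : ℝ) + 2) ∈ Icc 0 (2 * α + 2) := by
  have hn : (0 : ℝ) < n + 2 := by positivity
  refine ⟨⟨by positivity, ?_⟩, ⟨by positivity, ?_⟩⟩ <;> rw [div_le_iff₀ hn] <;> nlinarith

theorem abs_eval_gegenbauer_le (hα : 0 ≤ α) {x : ℝ} (hx : |x| ≤ 1) :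
    ∀ n, |(gegenbauer α n).eval x| ≤ (4 * α + 4) ^ n
  | 0 => by simp [gegenbauer]
  | 1 => by
    simp only [gegenbauer, eval_mul, eval_C, eval_X, abs_mul, pow_one,
      abs_of_nonneg (by positivity : 0 ≤ 2 * α)]
    nlinarith [abs_nonneg x]
  | n + 2 => by
    obtain ⟨⟨ha₀, ha⟩, ⟨hb₀, hb⟩⟩ := gegenbauer_recurrence_coeffs_mem_Icc hα n
    have ih₁ := abs_eval_gegenbauer_le hα hx (n + 1)
    have hpow : (4 * α + 4) ^ n ≤ (4 * α + 4) ^ (n + 1) :=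
      pow_le_pow_right₀ (by linarith) n.le_succ
    have ih₀ := (abs_eval_gegenbauer_le hα hx n).trans hpow
    rw [eval_gegenbauer_add_two]
    refine (abs_sub _ _).trans ?_
    rw [abs_mul, abs_mul, abs_mul, abs_of_nonneg ha₀, abs_of_nonneg hb₀]
    calc _ ≤ (2 * α + 2) * 1 * (4 * α + 4) ^ (n + 1) + (2 * α + 2) * (4 * α + 4) ^ (n + 1) := by
          gcongr
      _ = (4 * α + 4) ^ (n + 2) := by ring

theorem abs_derivative_eval_gegenbauer_le (hα : 0 ≤ α) {x : ℝ} (hx : |x| ≤ 1) :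
    ∀ n, |(gegenbauer α n).derivative.eval x| ≤ n * (4 * α + 4) ^ n
  | 0 => by simp [gegenbauer]
  | 1 => by simpa [gegenbauer, abs_of_nonneg hα] using (by linarith : 2 * α ≤ 4 * α + 4)
  | n + 2 => by
    obtain ⟨⟨ha₀, ha⟩, ⟨hb₀, hb⟩⟩ := gegenbauer_recurrence_coeffs_mem_Icc hα n
    have ih₁ := abs_derivative_eval_gegenbauer_le hα hx (n + 1)
    have hpow : (4 * α + 4) ^ n ≤ (4 * α + 4) ^ (n + 1) :=
      pow_le_pow_right₀ (by linarith) n.le_succ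
    have ih₀ := (abs_derivative_eval_gegenbauer_le hα hx n).trans
      (mul_le_mul_of_nonneg_left hpow n.cast_nonneg)
    have h₁ := abs_eval_gegenbauer_le hα hx (n + 1)
    rw [derivative_eval_gegenbauer_add_two]
    refine (abs_sub _ _).trans ?_
    rw [abs_mul, abs_mul, abs_of_nonneg ha₀, abs_of_nonneg hb₀]
    have hsum := (abs_add_le _ _).trans (add_le_add h₁ ((abs_mul x _).trans_le
      (mul_le_mul hx ih₁ (abs_nonneg _) zero_le_one)))
    calc _ ≤ (2 * α + 2) * ((4 * α + 4) ^ (n + 1) + 1 * ((n + 1 : ℕ) * (4 * α + 4) ^ (n + 1)))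
          + (2 * α + 2) * (n * (4 * α + 4) ^ (n + 1)) := by
          gcongr
      _ ≤ ((n + 2 : ℕ) : ℝ) * (4 * α + 4) ^ (n + 2) := by
          have hL : 0 ≤ (4 * α + 4) ^ (n + 1) := by positivity
          push_cast
          rw [pow_succ _ (n + 1)]
          nlinarith [mul_nonneg hα hL, mul_nonneg (mul_nonneg hα hα) hL]

theorem eval_gegenbauer_one_le_succ (hα : 1 / 2 ≤ α) :
    ∀ n, (gegenbauer α n).eval 1 ≤ (gegenbauer α (n + 1)).eval 1
  | 0 => by simpa [gegenbauer] using (by linarith : 1 ≤ 2 * α)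
  | n + 1 => by
    have ih := eval_gegenbauer_one_le_succ hα n
    have hb : 0 ≤ ((n : ℝ) + 2 * α) / ((n : ℝ) + 2) := by positivity
    have hrec : (gegenbauer α (n + 2)).eval 1 = (gegenbauer α (n + 1)).eval 1
        + ((n : ℝ) + 2 * α) / ((n : ℝ) + 2)
          * ((gegenbauer α (n + 1)).eval 1 - (gegenbauer α n).eval 1) := by
      rw [eval_gegenbauer_add_two]
      field_simp
      ring
    rw [hrec]
    nlinarith

theorem one_le_eval_gegenbauer_one (hα : 1 / 2 ≤ α) (n : ℕ) : 1 ≤ (gegenbauer α n).eval 1 := by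
  simpa [gegenbauer] using monotone_nat_of_le_succ (eval_gegenbauer_one_le_succ hα) n.zero_le

theorem half_le_eval_gegenbauer (hα : 1 / 2 ≤ α) {n : ℕ} {y : ℝ} (hy : y ∈ Icc (-1) 1)
    (hclose : n * (4 * α + 4) ^ n * (1 - y) ≤ 1 / 2) : 1 / 2 ≤ (gegenbauer α n).eval y := by
  have hmvt := norm_image_sub_le_of_norm_deriv_le_segment' (f := fun x => (gegenbauer α n).eval x)
    (fun x _ => ((gegenbauer α n).hasDerivAt x).hasDerivWithinAt)
    (fun x hx => abs_derivative_eval_gegenbauer_le (by linarith)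
      (abs_le.2 ⟨by linarith [hy.1, hx.1], hx.2.le⟩) n) 1 (right_mem_Icc.2 hy.2)
  rw [Real.norm_eq_abs] at hmvt
  linarith [(le_abs_self _).trans hmvt, one_le_eval_gegenbauer_one hα n]

/-- `C_n ≥ 1/2` on `[1 - 2η, 1 - η]` with `η = (4 (8α + 8)ⁿ)⁻¹`, where the weight is at least
`η ^ (α - 1/2)`. -/
theorem inv_rpow_div_four_le_gegenbauerNormSq (hα : 1 / 2 ≤ α) (n : ℕ) :
    ((4 * (8 * α + 8) ^ n) ^ (α + 1 / 2))⁻¹ / 4 ≤ gegenbauerNormSq α n := by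
  set η := (4 * (8 * α + 8) ^ n)⁻¹ with hηdef
  have hη₀ : 0 < η := by positivity
  have hη : η ≤ 1 / 4 := by
    rw [hηdef, inv_le_comm₀ (by positivity) (by norm_num)]
    nlinarith [one_le_pow₀ (by linarith : (1 : ℝ) ≤ 8 * α + 8) (n := n)]
  have hgap : (n : ℝ) * (4 * α + 4) ^ n * (2 * η) ≤ 1 / 2 := by
    have h2n : (n : ℝ) ≤ 2 ^ n := by exact_mod_cast n.lt_two_pow_self.le
    rw [hηdef, show (8 * α + 8) ^ n = 2 ^ n * (4 * α + 4) ^ n by rw [← mul_pow]; ring]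
    have : (0 : ℝ) < (4 * α + 4) ^ n := by positivity
    field_simp
    nlinarith
  have hweight : ∀ y ∈ Icc (1 - 2 * η) (1 - η),
      η ^ (α - 1 / 2) / 4 ≤ (1 - y ^ 2) ^ (α - 1 / 2) * ((gegenbauer α n).eval y) ^ 2 := by
    rintro y ⟨hy₁, hy₂⟩
    have hC := half_le_eval_gegenbauer hα ⟨by linarith, by linarith⟩
      ((mul_le_mul_of_nonneg_left (by linarith) (by positivity)).trans hgap)
    have hw : η ≤ 1 - y ^ 2 := by nlinarith
    calc η ^ (α - 1 / 2) / 4 = η ^ (α - 1 / 2) * (1 / 2) ^ 2 := by ring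
      _ ≤ (1 - y ^ 2) ^ (α - 1 / 2) * (1 / 2) ^ 2 := by gcongr
      _ ≤ _ := by gcongr; exact rpow_nonneg (by linarith) _
  have hcont : Continuous fun y : ℝ => (1 - y ^ 2) ^ (α - 1 / 2) * ((gegenbauer α n).eval y) ^ 2 :=
    ((continuous_const.sub (continuous_pow 2)).rpow_const fun _ => Or.inr (by linarith)).mul
      ((gegenbauer α n).continuous.pow 2)
  have hint := le_intervalIntegral_of_le_on_subinterval (c := -1) (d := 1) (by linarith)
    (by linarith) (by linarith) (hcont.intervalIntegrable _ _)
    (fun y hy => mul_nonneg (rpow_nonneg (by nlinarith [hy.1, hy.2]) _) (sq_nonneg _)) hweight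
  calc _ = (1 - η - (1 - 2 * η)) * (η ^ (α - 1 / 2) / 4) := by
        rw [← inv_rpow (by positivity), ← hηdef, show α + 1 / 2 = α - 1 / 2 + 1 by ring,
          rpow_add_one hη₀.ne']
        ring
    _ ≤ _ := hint

theorem gegenbauerNormSq_pos (hα : 1 / 2 ≤ α) (n : ℕ) : 0 < gegenbauerNormSq α n :=
  lt_of_lt_of_le (by positivity) (inv_rpow_div_four_le_gegenbauerNormSq hα n)

theorem summable_gegenbauer_majorant (hα : 1 / 2 ≤ α) {c : ℝ} (hc : 0 < c) :
    Summable fun n : ℕ =>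
      (4 * α + 4) ^ (2 * n) * (gegenbauerNormSq α n)⁻¹ * exp (-c * n ^ 2) := by
  set β := α + 1 / 2
  refine ((summable_pow_mul_exp_neg_mul_sq ((4 * α + 4) ^ 2 * (8 * α + 8) ^ β) hc).mul_left
    (4 * 4 ^ β)).of_nonneg_of_le (fun n => ?_) (fun n => ?_)
  · have := gegenbauerNormSq_pos hα n
    positivity
  have hinv : (gegenbauerNormSq α n)⁻¹ ≤ 4 * (4 * (8 * α + 8) ^ n) ^ β := by
    calc (gegenbauerNormSq α n)⁻¹ ≤ (((4 * (8 * α + 8) ^ n) ^ β)⁻¹ / 4)⁻¹ :=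
          inv_anti₀ (by positivity) (inv_rpow_div_four_le_gegenbauerNormSq hα n)
      _ = _ := by rw [inv_div, div_inv_eq_mul]
  have hsplit : (4 * (8 * α + 8) ^ n) ^ β = 4 ^ β * ((8 * α + 8) ^ β) ^ n := by
    rw [mul_rpow (by norm_num) (by positivity), rpow_pow_comm (by linarith)]
  calc _ ≤ (4 * α + 4) ^ (2 * n) * (4 * (4 * (8 * α + 8) ^ n) ^ β) * exp (-c * n ^ 2) := by
        gcongr
    _ = _ := by rw [hsplit, mul_pow, pow_mul]; ring

theorem abs_weight_mul_eval_gegenbauer_mul_eval_le (hα : 1 / 2 ≤ α) {x y : ℝ}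
    (hx : x ∈ Icc (-1) 1) (hy : y ∈ Icc (-1) 1) (n : ℕ) :
    |(1 - y ^ 2) ^ (α - 1 / 2) * (gegenbauer α n).eval x * (gegenbauer α n).eval y|
      ≤ (4 * α + 4) ^ (2 * n) := by
  have hw₀ : 0 ≤ 1 - y ^ 2 := by nlinarith [hy.1, hy.2]
  rw [abs_mul, abs_mul, abs_of_nonneg (rpow_nonneg hw₀ _)]
  calc _ ≤ 1 * (4 * α + 4) ^ n * (4 * α + 4) ^ n := by
        gcongr
        · exact rpow_le_one hw₀ (by nlinarith) (by linarith)
        · exact abs_eval_gegenbauer_le (by linarith) (abs_le.2 hx) n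
        · exact abs_eval_gegenbauer_le (by linarith) (abs_le.2 hy) n
    _ = (4 * α + 4) ^ (2 * n) := by ring

end Gegenbauer

/-- For `δ ≥ 2` and `t > 0`, the Gegenbauer eigenfunction expansion of the transition
density `p^{(Y)}(t, x, y)` converges uniformly in `(x, y) ∈ [−1, 1]²`. -/
theorem transitionDensity_series_unifConv (δ t : ℝ) (hδ : 2 ≤ δ) (ht : 0 < t) :
    ∃ F : ℝ × ℝ → ℝ,
      TendstoUniformlyOn
        (fun (N : ℕ) (p : ℝ × ℝ) => ∑ n ∈ Finset.range N,
          (1 - p.2 ^ 2) ^ (δ / 2 - 1)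
            * (gegenbauer (δ / 2 - 1 / 2) n).eval p.1
            * (gegenbauer (δ / 2 - 1 / 2) n).eval p.2
            / (∫ y in (-1 : ℝ)..1,
                (1 - y ^ 2) ^ (δ / 2 - 1) * ((gegenbauer (δ / 2 - 1 / 2) n).eval y) ^ 2)
            * Real.exp (-((n : ℝ) / 2) * ((n : ℝ) + δ - 1) * t))
        F atTop (Icc (-1 : ℝ) 1 ×ˢ Icc (-1 : ℝ) 1) := by
  have hα : 1 / 2 ≤ δ / 2 - 1 / 2 := by linarith
  simp only [show δ / 2 - 1 = δ / 2 - 1 / 2 - 1 / 2 by ring]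
  refine ⟨_, tendstoUniformlyOn_tsum_nat (summable_gegenbauer_majorant hα (half_pos ht)) ?_⟩
  rintro n ⟨x, y⟩ ⟨hx, hy⟩
  rw [← gegenbauerNormSq]
  have hexp : -((n : ℝ) / 2) * (n + δ - 1) * t ≤ -(t / 2) * n ^ 2 := by
    nlinarith [mul_nonneg (mul_nonneg n.cast_nonneg (by linarith : (0 : ℝ) ≤ δ - 1)) ht.le]
  have hI := gegenbauerNormSq_pos hα n
  rw [Real.norm_eq_abs, abs_mul, abs_div, abs_of_pos hI, abs_exp, div_eq_mul_inv]
  gcongr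
  exact abs_weight_mul_eval_gegenbauer_mul_eval_le hα hx hy n
end
end

section
/- Let T₁, T₂ ∈ ℝ, Z₁ ∈ C((−∞, T₁]), Z₂ ∈ C((−∞, T₂]), and let v : (−∞, T₁] → (−∞, T₂] be an increasing differentiable bijection with v'(t) → 1 and Z₂(v(t)) − Z₁(t) → 0 as t → −∞. Let f : ℝ → ℝ be uniformly continuous and bounded. Then for any t₀ < min(T₁, T₂), the limit lim_{t→−∞} (1/(t₀ − t)) ∫_t^{t₀} f(Z₁(s)) ds exists and is finite if and only if lim_{t→−∞} (1/(t₀ − t)) ∫_t^{t₀} f(Z₂(s)) ds does, and in that case the two limits are equal. -/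
/-!
Substituting `s = v u` on `[t, c]`, the difference `∫_t^{t₀} f ∘ Z₁ - ∫_t^{t₀} f ∘ Z₂` becomes
`∫_t^c (f (Z₁ u) - f (Z₂ (v u)) v'(u)) du`, plus a constant, minus an integral of `f ∘ Z₂` over
an interval of length `|v t - t|`. The integrand tends to `0` at `-∞` by uniform continuity of
`f` and `v' → 1`, so its integral is `o(t)`; and `v t - t = v c - c - ∫_t^c (v' - 1)` is `o(t)`
for the same reason. Hence the two integrals differ by `o(t₀ - t)` and the averages have the
same limits.
-/

open Filter Set Topology MeasureTheory Asymptotics Uniformity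

theorem UniformContinuous.tendsto_sub_comp_of_tendsto_sub {α E F : Type*}
    [SeminormedAddCommGroup E] [SeminormedAddCommGroup F] {f : E → F} (hf : UniformContinuous f)
    {a b : α → E} {l : Filter α} (h : Tendsto (fun x => a x - b x) l (𝓝 0)) :
    Tendsto (fun x => f (a x) - f (b x)) l (𝓝 0) := by
  have hab : Tendsto (fun x => (a x, b x)) l (𝓤 E) := by
    rw [tendsto_uniformity_iff_dist_tendsto_zero]
    simpa [dist_eq_norm] using h.norm
  rw [tendsto_zero_iff_norm_tendsto_zero]
  simpa [dist_eq_norm] using tendsto_uniformity_iff_dist_tendsto_zero.1 (Tendsto.comp hf hab)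

theorem eventually_intervalIntegrable_of_tendsto_atBot {E : Type*} [NormedAddCommGroup E]
    {h : ℝ → E} {l : E} (hm : AEStronglyMeasurable h volume) (hh : Tendsto h atBot (𝓝 l)) :
    ∀ᶠ c in atBot, ∀ t ≤ c, IntervalIntegrable h volume t c := by
  have hbd : ∀ᶠ c in atBot, ∀ u ≤ c, ‖h u‖ ≤ ‖l‖ + 1 :=
    eventually_forall_le_atBot.2 (hh.norm.eventually (ge_mem_nhds (lt_add_one _)))
  filter_upwards [hbd] with c hc t ht
  refine (intervalIntegrable_const (c := ‖l‖ + 1)).mono_fun' hm.restrict ?_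
  filter_upwards [ae_restrict_mem measurableSet_uIoc] with u hu
  rw [uIoc_of_le ht] at hu
  exact hc u hu.2

theorem isLittleO_intervalIntegral_atBot {E : Type*} [NormedAddCommGroup E] [NormedSpace ℝ E]
    {h : ℝ → E} {c : ℝ} (hint : ∀ t ≤ c, IntervalIntegrable h volume t c)
    (hh : Tendsto h atBot (𝓝 0)) :
    (fun t => ∫ s in t..c, h s) =o[atBot] id := by
  refine isLittleO_iff.2 fun ε hε => ?_
  obtain ⟨b, hb⟩ := eventually_atBot.1
    ((tendsto_zero_iff_norm_tendsto_zero.1 hh).eventually (ge_mem_nhds (half_pos hε)))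
  set b' := min (min b c) 0
  have hb'c : b' ≤ c := (min_le_left _ _).trans (min_le_right _ _)
  filter_upwards [eventually_le_atBot b',
    (isLittleO_const_id_atBot (∫ s in b'..c, h s)).bound (half_pos hε)] with t ht hK
  have htb' : ∫ s in t..c, h s = (∫ s in t..b', h s) + ∫ s in b'..c, h s :=
    (intervalIntegral.integral_add_adjacent_intervals
      ((hint t (ht.trans hb'c)).mono_set (uIcc_subset_uIcc_left (mem_uIcc_of_le ht hb'c)))
      (hint b' hb'c)).symm
  have hhead : ‖∫ s in t..b', h s‖ ≤ ε / 2 * |b' - t| :=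
    intervalIntegral.norm_integral_le_of_norm_le_const fun u hu => by
      rw [uIoc_of_le ht] at hu
      exact hb u (hu.2.trans ((min_le_left _ _).trans (min_le_left _ _)))
  have hlen : |b' - t| ≤ ‖id t‖ := by
    have : b' ≤ 0 := min_le_right _ _
    rw [abs_of_nonneg (by linarith), id, Real.norm_of_nonpos (by linarith)]
    linarith
  calc ‖∫ s in t..c, h s‖ ≤ ‖∫ s in t..b', h s‖ + ‖∫ s in b'..c, h s‖ := by
        rw [htb']; exact norm_add_le _ _
    _ ≤ ε / 2 * ‖id t‖ + ε / 2 * ‖id t‖ := by gcongr; exact hhead.trans (by gcongr)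
    _ = ε * ‖id t‖ := by ring

theorem isLittleO_sub_id_atBot_of_tendsto_deriv {v : ℝ → ℝ}
    (hvdiff : ∀ᶠ t in atBot, DifferentiableAt ℝ v t) (hv' : Tendsto (deriv v) atBot (𝓝 1)) :
    (fun t => v t - t) =o[atBot] id := by
  obtain ⟨c, hcdiff, hcint⟩ := ((eventually_forall_le_atBot.2 hvdiff).and
    (eventually_intervalIntegrable_of_tendsto_atBot
      (measurable_deriv v).aestronglyMeasurable hv')).exists
  have hint := isLittleO_intervalIntegral_atBot (h := fun u => deriv v u - 1)
    (fun t ht => (hcint t ht).sub intervalIntegrable_const) (by simpa using hv'.sub_const 1)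
  refine ((isLittleO_const_id_atBot (v c - c)).sub hint).congr' ?_ EventuallyEq.rfl
  filter_upwards [eventually_le_atBot c] with t ht
  have hftc : ∫ u in t..c, deriv v u = v c - v t :=
    intervalIntegral.integral_eq_sub_of_hasDerivAt
      (fun u hu => (hcdiff u (by rw [uIcc_of_le ht] at hu; exact hu.2)).hasDerivAt) (hcint t ht)
  rw [intervalIntegral.integral_sub (hcint t ht) intervalIntegrable_const, hftc]
  simp only [intervalIntegral.integral_const, smul_eq_mul, mul_one]
  ring

theorem intervalIntegrable_comp_mul_deriv {g v : ℝ → ℝ} {s : Set ℝ} {a b : ℝ}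
    (hg : ContinuousOn g s) (hvs : MapsTo v (uIcc a b) s)
    (hv : ∀ u ∈ uIcc a b, DifferentiableAt ℝ v u) (hv' : IntervalIntegrable (deriv v) volume a b) :
    IntervalIntegrable (fun u => g (v u) * deriv v u) volume a b :=
  hv'.continuousOn_mul (hg.comp (fun u hu => (hv u hu).continuousAt.continuousWithinAt) hvs)

theorem intervalIntegral_comp_mul_deriv_of_continuousOn {g v : ℝ → ℝ} {s : Set ℝ} {a b : ℝ}
    (hg : ContinuousOn g s) (hvs : MapsTo v (uIcc a b) s)
    (hv : ∀ u ∈ uIcc a b, DifferentiableAt ℝ v u) (hv' : IntervalIntegrable (deriv v) volume a b) :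
    ∫ u in a..b, g (v u) * deriv v u = ∫ x in v a..v b, g x := by
  have hvc : ContinuousOn v (uIcc a b) := fun u hu => (hv u hu).continuousAt.continuousWithinAt
  have hgc : ContinuousOn g (v '' uIcc a b) := hg.mono hvs.image_subset
  refine intervalIntegral.integral_comp_mul_deriv''' hvc
    (fun u hu => (hv u (Ioo_subset_Icc_self hu)).hasDerivAt.hasDerivWithinAt)
    (hgc.mono (image_mono Ioo_subset_Icc_self))
    (hgc.integrableOn_compact (isCompact_uIcc.image_of_continuousOn hvc)) ?_
  exact (intervalIntegrable_iff').1 (intervalIntegrable_comp_mul_deriv hg hvs hv hv')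

theorem ContinuousOn.intervalIntegrable_of_le {g : ℝ → ℝ} {T a b : ℝ}
    (hg : ContinuousOn g (Iic T)) (ha : a ≤ T) (hb : b ≤ T) : IntervalIntegrable g volume a b :=
  (hg.mono fun _ hx => hx.2.trans (sup_le ha hb)).intervalIntegrable

theorem intervalIntegral_sub_eq_of_timeChange {g₁ g₂ v : ℝ → ℝ} {T₁ T₂ t c t₀ : ℝ}
    (hg₁ : ContinuousOn g₁ (Iic T₁)) (hg₂ : ContinuousOn g₂ (Iic T₂))
    (hvmaps : MapsTo v (Iic T₁) (Iic T₂)) (hvdiff : ∀ u ∈ Iic T₁, DifferentiableAt ℝ v u)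
    (hv' : IntervalIntegrable (deriv v) volume t c) (htc : t ≤ c) (hct₀ : c ≤ t₀)
    (ht₀₁ : t₀ ≤ T₁) (ht₀₂ : t₀ ≤ T₂) :
    (∫ s in t..t₀, g₁ s) - ∫ s in t..t₀, g₂ s =
      (∫ u in t..c, g₁ u - g₂ (v u) * deriv v u)
        + ((∫ s in c..t₀, g₁ s) - ∫ s in v c..t₀, g₂ s) - ∫ s in t..v t, g₂ s := by
  have hc₁ : c ≤ T₁ := hct₀.trans ht₀₁
  have hsub : uIcc t c ⊆ Iic T₁ := fun _ hu => hu.2.trans (sup_le (htc.trans hc₁) hc₁)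
  have hvt : v t ≤ T₂ := hvmaps (htc.trans hc₁ : t ≤ T₁)
  have hvc : v c ≤ T₂ := hvmaps hc₁
  have ht₂ : t ≤ T₂ := (htc.trans hct₀).trans ht₀₂
  have hcov := intervalIntegral_comp_mul_deriv_of_continuousOn hg₂ (hvmaps.mono_left hsub)
    (fun u hu => hvdiff u (hsub hu)) hv'
  rw [intervalIntegral.integral_sub (hg₁.intervalIntegrable_of_le (htc.trans hc₁) hc₁)
      (intervalIntegrable_comp_mul_deriv hg₂ (hvmaps.mono_left hsub)
        (fun u hu => hvdiff u (hsub hu)) hv'), hcov,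
    ← intervalIntegral.integral_add_adjacent_intervals
      (hg₁.intervalIntegrable_of_le (htc.trans hc₁) hc₁) (hg₁.intervalIntegrable_of_le hc₁ ht₀₁),
    ← intervalIntegral.integral_add_adjacent_intervals (b := v t)
      (hg₂.intervalIntegrable_of_le ht₂ hvt) (hg₂.intervalIntegrable_of_le hvt ht₀₂),
    ← intervalIntegral.integral_add_adjacent_intervals (a := v t) (b := v c)
      (hg₂.intervalIntegrable_of_le hvt hvc) (hg₂.intervalIntegrable_of_le hvc ht₀₂)]
  ring

theorem tendsto_one_div_mul_iff_of_isLittleO {a b : ℝ → ℝ} {t₀ L : ℝ}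
    (h : (fun t => a t - b t) =o[atBot] id) :
    Tendsto (fun t => 1 / (t₀ - t) * a t) atBot (𝓝 L) ↔
      Tendsto (fun t => 1 / (t₀ - t) * b t) atBot (𝓝 L) := by
  have hid : (id : ℝ → ℝ) =O[atBot] fun t => t₀ - t := by
    refine IsBigO.of_bound 2 ?_
    filter_upwards [eventually_le_atBot (min 0 (min t₀ (2 * t₀)))] with t ht
    have h0 : t ≤ 0 := ht.trans (min_le_left _ _)
    have h1 : t ≤ t₀ := ht.trans ((min_le_right _ _).trans (min_le_left _ _))
    have h2 : t ≤ 2 * t₀ := ht.trans ((min_le_right _ _).trans (min_le_right _ _))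
    rw [id, Real.norm_of_nonpos h0, Real.norm_of_nonneg (by linarith)]
    linarith
  refine tendsto_iff_of_dist ?_
  simpa [Real.dist_eq, ← mul_sub, div_eq_inv_mul] using (h.trans_isBigO hid).tendsto_div_nhds_zero.abs

theorem isLittleO_intervalIntegral_sub_of_timeChange {g₁ g₂ v : ℝ → ℝ} {T₁ T₂ t₀ M : ℝ}
    (hg₁ : ContinuousOn g₁ (Iic T₁)) (hg₂ : ContinuousOn g₂ (Iic T₂)) (hM : ∀ x, ‖g₂ x‖ ≤ M)
    (hvmaps : MapsTo v (Iic T₁) (Iic T₂)) (hvdiff : ∀ u ∈ Iic T₁, DifferentiableAt ℝ v u)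
    (hv' : Tendsto (deriv v) atBot (𝓝 1)) (hg : Tendsto (fun u => g₂ (v u) - g₁ u) atBot (𝓝 0))
    (ht₀₁ : t₀ ≤ T₁) (ht₀₂ : t₀ ≤ T₂) :
    (fun t => (∫ s in t..t₀, g₁ s) - ∫ s in t..t₀, g₂ s) =o[atBot] id := by
  obtain ⟨c, hct₀, hcint⟩ := ((eventually_le_atBot t₀).and
    (eventually_intervalIntegrable_of_tendsto_atBot
      (measurable_deriv v).aestronglyMeasurable hv')).exists
  have hc₁ : c ≤ T₁ := hct₀.trans ht₀₁
  -- `g₁ - (g₂ ∘ v) v' = -((g₂ ∘ v) - g₁) - (g₂ ∘ v) (v' - 1)`, and `g₂ ∘ v` is bounded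
  have hh : Tendsto (fun u => g₁ u - g₂ (v u) * deriv v u) atBot (𝓝 0) := by
    have hbd : IsBoundedUnder (· ≤ ·) atBot ((‖·‖) ∘ fun u => g₂ (v u)) :=
      isBoundedUnder_of ⟨M, fun u => hM _⟩
    have := hg.neg.sub (isBoundedUnder_le_mul_tendsto_zero hbd (by simpa using hv'.sub_const 1))
    simpa [mul_sub, sub_sub] using this
  have hhint : ∀ t ≤ c, IntervalIntegrable (fun u => g₁ u - g₂ (v u) * deriv v u) volume t c :=
    fun t ht =>
      have hsub : uIcc t c ⊆ Iic T₁ := fun _ hu => hu.2.trans (sup_le (ht.trans hc₁) hc₁)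
      (hg₁.intervalIntegrable_of_le (ht.trans hc₁) hc₁).sub
        (intervalIntegrable_comp_mul_deriv hg₂ (hvmaps.mono_left hsub)
          (fun u hu => hvdiff u (hsub hu)) (hcint t ht))
  have hshift : (fun t => ∫ s in t..v t, g₂ s) =o[atBot] id :=
    (IsBigO.of_bound M (Eventually.of_forall fun t =>
      intervalIntegral.norm_integral_le_of_norm_le_const fun _ _ => hM _)).trans_isLittleO
      (isLittleO_sub_id_atBot_of_tendsto_deriv
        ((eventually_le_atBot T₁).mono hvdiff) hv')
  refine (((isLittleO_intervalIntegral_atBot hhint hh).add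
    (isLittleO_const_id_atBot ((∫ s in c..t₀, g₁ s) - ∫ s in v c..t₀, g₂ s))).sub
    hshift).congr' ?_ EventuallyEq.rfl
  filter_upwards [eventually_le_atBot c] with t ht
  exact (intervalIntegral_sub_eq_of_timeChange hg₁ hg₂ hvmaps hvdiff (hcint t ht) ht hct₀
    ht₀₁ ht₀₂).symm

theorem ergodic_average_timeChange_invariant_general
    (T₁ T₂ : ℝ) (Z₁ Z₂ v : ℝ → ℝ)
    (hZ₁ : ContinuousOn Z₁ (Iic T₁)) (hZ₂ : ContinuousOn Z₂ (Iic T₂))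
    (hvsurj : v '' Iic T₁ = Iic T₂)
    (hvdiff : ∀ t ∈ Iic T₁, DifferentiableAt ℝ v t)
    (hv' : Tendsto (deriv v) atBot (𝓝 1))
    (hZZ : Tendsto (fun t => Z₂ (v t) - Z₁ t) atBot (𝓝 0))
    (f : ℝ → ℝ) (hf : UniformContinuous f) (hfb : ∃ M : ℝ, ∀ x, |f x| ≤ M) :
    ∀ t₀ : ℝ, t₀ < min T₁ T₂ → ∀ L : ℝ,
      Tendsto (fun t => (1 / (t₀ - t)) * ∫ s in t..t₀, f (Z₁ s)) atBot (𝓝 L) ↔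
      Tendsto (fun t => (1 / (t₀ - t)) * ∫ s in t..t₀, f (Z₂ s)) atBot (𝓝 L) := by
  obtain ⟨M, hM⟩ := hfb
  intro t₀ ht₀ L
  have hvmaps : MapsTo v (Iic T₁) (Iic T₂) := hvsurj ▸ mapsTo_image v _
  exact tendsto_one_div_mul_iff_of_isLittleO <|
    isLittleO_intervalIntegral_sub_of_timeChange (hf.continuous.comp_continuousOn hZ₁)
      (hf.continuous.comp_continuousOn hZ₂) (fun x => hM _) hvmaps hvdiff hv'
      (hf.tendsto_sub_comp_of_tendsto_sub hZZ) (ht₀.le.trans (min_le_left _ _))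
      (ht₀.le.trans (min_le_right _ _))

/-- Let `Z₁ ∈ C((−∞, T₁])`, `Z₂ ∈ C((−∞, T₂])` and let `v` be an increasing differentiable
bijection from `(−∞, T₁]` onto `(−∞, T₂]` with `v'(t) → 1` and `Z₂(v(t)) − Z₁(t) → 0` as
`t → −∞`. Let `f` be uniformly continuous and bounded. Then for any `t₀ < min(T₁, T₂)`
the Cesàro-type limits `lim_{t→−∞} (1/(t₀ − t)) ∫_t^{t₀} f(Zⱼ(s)) ds`, `j = 1, 2`, exist
and are finite simultaneously, and in that case they are equal. -/
theorem ergodic_average_timeChange_invariant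
    (T₁ T₂ : ℝ) (Z₁ Z₂ v : ℝ → ℝ)
    (hZ₁ : ContinuousOn Z₁ (Iic T₁)) (hZ₂ : ContinuousOn Z₂ (Iic T₂))
    (hvmono : StrictMonoOn v (Iic T₁)) (hvsurj : v '' Iic T₁ = Iic T₂)
    (hvdiff : ∀ t ∈ Iic T₁, DifferentiableAt ℝ v t)
    (hv' : Tendsto (deriv v) atBot (𝓝 1))
    (hZZ : Tendsto (fun t => Z₂ (v t) - Z₁ t) atBot (𝓝 0))
    (f : ℝ → ℝ) (hf : UniformContinuous f) (hfb : ∃ M : ℝ, ∀ x, |f x| ≤ M) :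
    ∀ t₀ : ℝ, t₀ < min T₁ T₂ → ∀ L : ℝ,
      Tendsto (fun t => (1 / (t₀ - t)) * ∫ s in t..t₀, f (Z₁ s)) atBot (𝓝 L) ↔
      Tendsto (fun t => (1 / (t₀ - t)) * ∫ s in t..t₀, f (Z₂ s)) atBot (𝓝 L) :=
  ergodic_average_timeChange_invariant_general T₁ T₂ Z₁ Z₂ v hZ₁ hZ₂ hvsurj hvdiff hv' hZZ f hf hfb
end

section
/- Let (D_n) and D be domains in ℂ with D_n → D in the Carathéodory sense, and let f_n : D_n → ℂ be injective analytic maps converging locally uniformly on D to a nonconstant function f. Then f is injective on D. -/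
open Filter Set Topology

/-- Carathéodory convergence of a sequence of domains `D n` to a domain `D`:
(i) every compact subset of `D` is contained in `D n` for all large `n`;
(ii) every boundary point of `D` is a limit of boundary points of the `D n`. -/
def CaraTendsto (D : ℕ → Set ℂ) (D' : Set ℂ) : Prop :=
  (∀ K : Set ℂ, IsCompact K → K ⊆ D' → ∀ᶠ n in atTop, K ⊆ D n) ∧
  (∀ z ∈ frontier D', ∃ w : ℕ → ℂ,
    (∀ n, w n ∈ frontier (D n)) ∧ Tendsto w atTop (𝓝 z))

/-- Minimum modulus trick: a holomorphic function on a closed ball whose value at the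
center is smaller in norm than its values on the boundary sphere must vanish somewhere. -/
lemma exists_zero_of_small_center {z : ℂ} {r c : ℝ} (hr : 0 < r) {h : ℂ → ℂ}
    (hd : DifferentiableOn ℂ h (Metric.closedBall z r))
    (hb : ∀ x ∈ Metric.sphere z r, c ≤ ‖h x‖) (hc : ‖h z‖ < c) :
    ∃ a ∈ Metric.closedBall z r, h a = 0 := by
  by_contra hno
  push_neg at hno
  have hcpos : 0 < c := lt_of_le_of_lt (norm_nonneg _) hc
  have hzc : z ∈ Metric.closedBall z r := Metric.mem_closedBall_self hr.le
  have hhz : h z ≠ 0 := hno z hzc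
  have hgd : DifferentiableOn ℂ (fun x => (h x)⁻¹) (Metric.closedBall z r) := by
    intro x hx
    exact ((hd x hx).inv (hno x hx))
  have hcl : closure (Metric.ball z r) = Metric.closedBall z r := closure_ball z hr.ne'
  have hdc : DiffContOnCl ℂ (fun x => (h x)⁻¹) (Metric.ball z r) := by
    apply DifferentiableOn.diffContOnCl
    rw [hcl]; exact hgd
  have hbd : ∀ x ∈ frontier (Metric.ball z r), ‖(h x)⁻¹‖ ≤ c⁻¹ := by
    intro x hx
    rw [frontier_ball z hr.ne'] at hx
    have hx' : x ∈ Metric.closedBall z r := Metric.sphere_subset_closedBall hx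
    rw [norm_inv]
    exact inv_anti₀ hcpos (hb x hx)
  have hle : ‖(h z)⁻¹‖ ≤ c⁻¹ := by
    apply Complex.norm_le_of_forall_mem_frontier_norm_le Metric.isBounded_ball hdc hbd
    rw [hcl]; exact hzc
  rw [norm_inv] at hle
  have : c ≤ ‖h z‖ := by
    have h0 : 0 < ‖h z‖ := norm_pos_iff.mpr hhz
    calc c = (c⁻¹)⁻¹ := (inv_inv c).symm
    _ ≤ (‖h z‖⁻¹)⁻¹ := by
      apply inv_anti₀ (by positivity) hle
    _ = ‖h z‖ := inv_inv _
  exact absurd hc (not_lt.mpr this)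

/-- Let domains `D n → D` in the Carathéodory sense and let `f n : D n → ℂ` be injective
analytic maps converging locally uniformly on `D` to a nonconstant function `f`.
Then `f` is injective on `D`. -/
theorem cara_limit_injective
    (D : ℕ → Set ℂ) (D' : Set ℂ)
    (hDopen : ∀ n, IsOpen (D n)) (hDconn : ∀ n, IsConnected (D n))
    (hD'open : IsOpen D') (hD'conn : IsConnected D')
    (hcara : CaraTendsto D D')
    (f : ℕ → ℂ → ℂ) (F : ℂ → ℂ)
    (hf : ∀ n, DifferentiableOn ℂ (f n) (D n))
    (hinj : ∀ n, InjOn (f n) (D n))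
    (hconv : TendstoLocallyUniformlyOn f F atTop D')
    (hnc : ¬ ∃ c : ℂ, EqOn F (Function.const ℂ c) D') :
    InjOn F D' := by
  classical
  -- F is differentiable on D'
  have hFd : DifferentiableOn ℂ F D' := by
    intro z hz
    obtain ⟨ε, hε, hball⟩ := Metric.isOpen_iff.mp hD'open z hz
    have hcb : Metric.closedBall z (ε/2) ⊆ D' :=
      (Metric.closedBall_subset_ball (by linarith)).trans hball
    have hK := hcara.1 _ (isCompact_closedBall z (ε/2)) hcb
    have hloc : TendstoLocallyUniformlyOn f F atTop (Metric.ball z (ε/2)) :=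
      hconv.mono (Metric.ball_subset_closedBall.trans hcb)
    have hdiff : DifferentiableOn ℂ F (Metric.ball z (ε/2)) := by
      apply hloc.differentiableOn ?_ Metric.isOpen_ball
      filter_upwards [hK] with n hn
      exact (hf n).mono (Metric.ball_subset_closedBall.trans hn)
    have hzz : z ∈ Metric.ball z (ε/2) := Metric.mem_ball_self (by linarith)
    exact ((hdiff z hzz).differentiableAt
      (Metric.isOpen_ball.mem_nhds hzz)).differentiableWithinAt
  have hFa : AnalyticOnNhd ℂ F D' := hFd.analyticOnNhd hD'open
  intro z₁ hz₁ z₂ hz₂ hF12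
  by_contra hne
  set w₀ : ℂ := F z₁ with hw₀
  set G : ℂ → ℂ := fun z => F z - w₀ with hG
  have hGa : AnalyticOnNhd ℂ G D' := fun z hz => (hFa z hz).sub analyticAt_const
  -- isolated zeros at z₁ and z₂
  have key : ∀ z ∈ D', ∀ᶠ x in 𝓝[≠] z, G x ≠ 0 := by
    intro z hz
    rcases (hGa z hz).eventually_eq_zero_or_eventually_ne_zero with h | h
    · exfalso
      apply hnc
      refine ⟨w₀, fun x hx => ?_⟩
      have := hGa.eqOn_zero_of_preconnected_of_eventuallyEq_zero
        hD'conn.isPreconnected hz h hx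
      simpa [hG, sub_eq_zero, Function.const] using this
    · exact h
  -- extract punctured-ball radii
  have hpb : ∀ z ∈ D', ∃ δ > 0, ∀ x, x ≠ z → dist x z < δ → G x ≠ 0 := by
    intro z hz
    obtain ⟨δ, hδ, hδ'⟩ := Metric.mem_nhdsWithin_iff.mp (key z hz)
    exact ⟨δ, hδ, fun x hx hd => hδ' ⟨Metric.mem_ball.mpr hd, hx⟩⟩
  obtain ⟨δ₁, hδ₁, hδ₁'⟩ := hpb z₁ hz₁
  obtain ⟨δ₂, hδ₂, hδ₂'⟩ := hpb z₂ hz₂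
  obtain ⟨ε₁, hε₁, hball₁⟩ := Metric.isOpen_iff.mp hD'open z₁ hz₁
  obtain ⟨ε₂, hε₂, hball₂⟩ := Metric.isOpen_iff.mp hD'open z₂ hz₂
  have hdistpos : 0 < dist z₁ z₂ := dist_pos.mpr hne
  set r : ℝ := min (min (ε₁/2) (ε₂/2)) (min (min (δ₁/2) (δ₂/2)) (dist z₁ z₂ / 3)) with hrdef
  have hr : 0 < r := by positivity
  have hrε₁ : r < ε₁ := lt_of_le_of_lt ((min_le_left _ _).trans (min_le_left _ _)) (by linarith)
  have hrε₂ : r < ε₂ := lt_of_le_of_lt ((min_le_left _ _).trans (min_le_right _ _)) (by linarith)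
  have hrδ₁ : r < δ₁ := lt_of_le_of_lt
    ((min_le_right _ _).trans ((min_le_left _ _).trans (min_le_left _ _))) (by linarith)
  have hrδ₂ : r < δ₂ := lt_of_le_of_lt
    ((min_le_right _ _).trans ((min_le_left _ _).trans (min_le_right _ _))) (by linarith)
  have hrd : r ≤ dist z₁ z₂ / 3 := (min_le_right _ _).trans (min_le_right _ _)
  have hcb₁ : Metric.closedBall z₁ r ⊆ D' := fun x hx =>
    hball₁ (lt_of_le_of_lt (Metric.mem_closedBall.mp hx) hrε₁)
  have hcb₂ : Metric.closedBall z₂ r ⊆ D' := fun x hx =>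
    hball₂ (lt_of_le_of_lt (Metric.mem_closedBall.mp hx) hrε₂)
  have hsph₁ : ∀ x ∈ Metric.sphere z₁ r, G x ≠ 0 := by
    intro x hx
    have hd : dist x z₁ = r := hx
    exact hδ₁' x (fun h => by simp [h, dist_self] at hd; linarith) (by rw [hd]; exact hrδ₁)
  have hsph₂ : ∀ x ∈ Metric.sphere z₂ r, G x ≠ 0 := by
    intro x hx
    have hd : dist x z₂ = r := hx
    exact hδ₂' x (fun h => by simp [h, dist_self] at hd; linarith) (by rw [hd]; exact hrδ₂)
  -- disjointness
  have hdisj : ∀ a, a ∈ Metric.closedBall z₁ r → a ∉ Metric.closedBall z₂ r := by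
    intro a h1 h2
    have : dist z₁ z₂ ≤ dist z₁ a + dist a z₂ := dist_triangle _ _ _
    rw [Metric.mem_closedBall] at h1 h2
    rw [dist_comm z₁ a] at this
    have : dist z₁ z₂ ≤ 2 * r := by linarith
    linarith [hrd]
  -- the minimum of ‖G‖ on the two spheres
  set S : Set ℂ := Metric.sphere z₁ r ∪ Metric.sphere z₂ r with hS
  have hScomp : IsCompact S := (isCompact_sphere z₁ r).union (isCompact_sphere z₂ r)
  have hSsub : S ⊆ D' := union_subset (Metric.sphere_subset_closedBall.trans hcb₁)
    (Metric.sphere_subset_closedBall.trans hcb₂)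
  have hSne : S.Nonempty := by
    have h1 : (Metric.sphere z₁ r).Nonempty := NormedSpace.sphere_nonempty.mpr hr.le
    exact h1.mono subset_union_left
  have hGcont : ContinuousOn (fun x => ‖G x‖) S :=
    ((hFd.continuousOn.mono hSsub).sub continuousOn_const).norm
  obtain ⟨x₀, hx₀S, hx₀min⟩ := hScomp.exists_isMinOn hSne hGcont
  set m : ℝ := ‖G x₀‖ with hm
  have hmpos : 0 < m := by
    apply norm_pos_iff.mpr
    rcases hx₀S with h | h
    · exact hsph₁ x₀ h
    · exact hsph₂ x₀ h
  have hmle : ∀ x ∈ S, m ≤ ‖G x‖ := fun x hx => hx₀min hx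
  -- uniform convergence on the union of closed balls
  set K : Set ℂ := Metric.closedBall z₁ r ∪ Metric.closedBall z₂ r with hK
  have hKcomp : IsCompact K := (isCompact_closedBall z₁ r).union (isCompact_closedBall z₂ r)
  have hKsub : K ⊆ D' := union_subset hcb₁ hcb₂
  have hu : TendstoUniformlyOn f F atTop K :=
    (tendstoLocallyUniformlyOn_iff_forall_isCompact hD'open).mp hconv K hKsub hKcomp
  have hev1 : ∀ᶠ n in atTop, ∀ x ∈ K, dist (F x) (f n x) < m / 2 :=
    Metric.tendstoUniformlyOn_iff.mp hu (m/2) (by positivity)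
  have hev2 : ∀ᶠ n in atTop, K ⊆ D n := hcara.1 K hKcomp hKsub
  obtain ⟨n, hn1, hn2⟩ := (hev1.and hev2).exists
  -- f n - w₀ has a zero in each closed ball
  have hzero : ∀ z : ℂ, Metric.closedBall z r ⊆ K → Metric.sphere z r ⊆ S → z ∈ K → F z = w₀ →
      ∃ a ∈ Metric.closedBall z r, f n a = w₀ := by
    intro z hzK hzS hzmem hFz
    have hd : DifferentiableOn ℂ (fun x => f n x - w₀) (Metric.closedBall z r) := by
      apply DifferentiableOn.sub _ (differentiableOn_const _)
      exact (hf n).mono (hzK.trans hn2)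
    have hb : ∀ x ∈ Metric.sphere z r, m / 2 ≤ ‖f n x - w₀‖ := by
      intro x hx
      have hGx : m ≤ ‖G x‖ := hmle x (hzS hx)
      have hdx : dist (F x) (f n x) < m / 2 := hn1 x (hzK (Metric.sphere_subset_closedBall hx))
      have heq : G x = (f n x - w₀) + (F x - f n x) := by show F x - w₀ = _; ring
      have h2 := norm_add_le (f n x - w₀) (F x - f n x)
      rw [← heq] at h2
      rw [dist_eq_norm] at hdx
      linarith
    have hc : ‖f n z - w₀‖ < m / 2 := by
      have := hn1 z hzmem
      rw [hFz] at this
      rw [← dist_eq_norm, dist_comm]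
      exact this
    obtain ⟨a, ha, ha0⟩ := exists_zero_of_small_center hr hd hb hc
    exact ⟨a, ha, sub_eq_zero.mp ha0⟩
  obtain ⟨a, ha, hfa⟩ := hzero z₁ subset_union_left subset_union_left
    (Or.inl (Metric.mem_closedBall_self hr.le)) rfl
  obtain ⟨b, hb, hfb⟩ := hzero z₂ subset_union_right subset_union_right
    (Or.inr (Metric.mem_closedBall_self hr.le)) hF12.symm
  have hab : a ≠ b := fun h => hdisj a ha (h ▸ hb)
  exact hab (hinj n (hn2 (Or.inl ha)) (hn2 (Or.inr hb)) (hfa.trans hfb.symm))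
end

section
/- Let (D_n) and D be domains in ℂ with D_n → D in the Carathéodory topology, and let f_n : D_n → ℂ be conformal (injective analytic) maps converging locally uniformly on D to a nonconstant (hence conformal) map f. Then for every compact set K ⊂ f(D), K ⊂ f_n(D_n) for all sufficiently large n, and the inverse maps f_n^{-1} converge locally uniformly to f^{-1} on f(D). -/
open Filter Set Topology

open Metric
lemma exists_eq_in_ball {g : ℂ → ℂ} {U : Set ℂ} {z₀ w : ℂ} {r b : ℝ} (hr : 0 < r)
    (hsub : closedBall z₀ r ⊆ U) (hg : DifferentiableOn ℂ g U)
    (hb : ∀ z ∈ sphere z₀ r, b ≤ ‖g z - w‖) (hz₀ : ‖g z₀ - w‖ < b) :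
    ∃ z ∈ ball z₀ r, g z = w := by
  by_contra hcon
  push_neg at hcon
  have hbpos : 0 < b := lt_of_le_of_lt (norm_nonneg _) hz₀
  have hne : ∀ z ∈ closedBall z₀ r, g z - w ≠ 0 := by
    intro z hz
    rcases lt_or_eq_of_le (mem_closedBall.mp hz) with h | h
    · exact sub_ne_zero.mpr (hcon z (mem_ball.mpr h))
    · have := hb z (mem_sphere.mpr h)
      intro h0; rw [h0, norm_zero] at this; linarith
  set h : ℂ → ℂ := fun z => (g z - w)⁻¹ with hhdef
  have hdiff : DiffContOnCl ℂ h (ball z₀ r) := by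
    constructor
    · apply DifferentiableOn.inv
      · exact (hg.mono (ball_subset_closedBall.trans hsub)).sub (differentiableOn_const w)
      · exact fun z hz => hne z (ball_subset_closedBall hz)
    · rw [closure_ball z₀ hr.ne']
      apply ContinuousOn.inv₀
      · exact ((hg.mono hsub).continuousOn).sub continuousOn_const
      · exact hne
  have hfr : ∀ z ∈ frontier (ball z₀ r), ‖h z‖ ≤ b⁻¹ := by
    intro z hz
    rw [frontier_ball z₀ hr.ne'] at hz
    rw [hhdef]
    simp only [norm_inv]
    exact inv_anti₀ hbpos (hb z hz)
  have := Complex.norm_le_of_forall_mem_frontier_norm_le isBounded_ball hdiff hfr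
    (z := z₀) (by rw [closure_ball z₀ hr.ne']; exact mem_closedBall_self hr.le)
  rw [hhdef] at this
  simp only [norm_inv] at this
  have h2 : b ≤ ‖g z₀ - w‖ := by
    have hgpos : 0 < ‖g z₀ - w‖ := norm_pos_iff.mpr (hne z₀ (mem_closedBall_self hr.le))
    exact (inv_le_inv₀ hgpos hbpos).mp this
  linarith

lemma key_ball (D : ℕ → Set ℂ) (D' : Set ℂ)
    (hD'open : IsOpen D') (hD'conn : IsConnected D')
    (hcara1 : ∀ K : Set ℂ, IsCompact K → K ⊆ D' → ∀ᶠ n in atTop, K ⊆ D n)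
    (f : ℕ → ℂ → ℂ) (F : ℂ → ℂ)
    (hf : ∀ n, DifferentiableOn ℂ (f n) (D n))
    (hconv : TendstoLocallyUniformlyOn f F atTop D')
    (hnc : ¬ ∃ c : ℂ, EqOn F (Function.const ℂ c) D')
    (hFd : DifferentiableOn ℂ F D')
    {z₀ : ℂ} (hz₀ : z₀ ∈ D') {ε : ℝ} (hε : 0 < ε) :
    ∃ δ > 0, (∀ w ∈ ball (F z₀) δ, ∃ z ∈ ball z₀ ε ∩ D', F z = w) ∧
      ∀ᶠ n in atTop, ∀ w ∈ ball (F z₀) δ, ∃ z ∈ ball z₀ ε ∩ D n, f n z = w := by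
  have hFan : AnalyticOnNhd ℂ F D' := hFd.analyticOnNhd hD'open
  -- isolated value: F z ≠ F z₀ on a punctured neighborhood
  have hiso : ∀ᶠ z in 𝓝[≠] z₀, F z ≠ F z₀ := by
    rcases (hFan z₀ hz₀).eventually_eq_or_eventually_ne analyticAt_const with h | h
    · exact absurd ⟨F z₀, (hFan.eqOn_of_preconnected_of_eventuallyEq analyticOnNhd_const
        hD'conn.isPreconnected hz₀ h)⟩ hnc
    · exact h
  -- pick a good radius r : closedBall z₀ r ⊆ D', F ≠ F z₀ on closedBall \ {z₀}, r < ε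
  obtain ⟨U, hUopen, hz₀U, hU⟩ : ∃ U, IsOpen U ∧ z₀ ∈ U ∧
      ∀ z ∈ U, z ≠ z₀ → F z ≠ F z₀ := by
    rw [eventually_nhdsWithin_iff] at hiso
    obtain ⟨U, hUsub, hUopen, hz₀U⟩ := _root_.mem_nhds_iff.mp hiso
    exact ⟨U, hUopen, hz₀U, fun z hz hne => hUsub hz hne⟩
  obtain ⟨r₀, hr₀pos, hr₀⟩ := Metric.isOpen_iff.mp (hUopen.inter hD'open) z₀ ⟨hz₀U, hz₀⟩
  set r := min (r₀ / 2) (ε / 2) with hrdef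
  have hrpos : 0 < r := lt_min (by linarith) (by linarith)
  have hrε : r < ε := lt_of_le_of_lt (min_le_right _ _) (by linarith)
  have hrsub : closedBall z₀ r ⊆ U ∩ D' := by
    refine subset_trans ?_ hr₀
    intro z hz
    have := mem_closedBall.mp hz
    exact mem_ball.mpr (lt_of_le_of_lt this (lt_of_le_of_lt (min_le_left _ _) (by linarith)))
  have hrD' : closedBall z₀ r ⊆ D' := hrsub.trans inter_subset_right
  -- minimum of ‖F z - F z₀‖ on the sphere
  have hsphne : (sphere z₀ r).Nonempty := NormedSpace.sphere_nonempty.mpr hrpos.le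
  have hsphsub : sphere z₀ r ⊆ closedBall z₀ r := sphere_subset_closedBall
  obtain ⟨zm, hzm, hzmmin⟩ := (isCompact_sphere z₀ r).exists_isMinOn hsphne
    (((hFd.continuousOn.mono (hsphsub.trans hrD')).sub continuousOn_const).norm)
  set m := ‖F zm - F z₀‖ with hmdef
  have hmin : ∀ z ∈ sphere z₀ r, m ≤ ‖F z - F z₀‖ := fun z hz => hzmmin hz
  have hmpos : 0 < m := by
    rw [hmdef, norm_pos_iff, sub_ne_zero]
    have hzmU : zm ∈ U := (hrsub (hsphsub hzm)).1
    have hzmne : zm ≠ z₀ := by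
      intro h; rw [h, mem_sphere, dist_self] at hzm; exact hrpos.ne' hzm.symm
    exact hU zm hzmU hzmne
  refine ⟨m / 4, by linarith, ?_, ?_⟩
  · -- F attains every w ∈ ball (F z₀) (m/4) inside ball z₀ r
    intro w hw
    have hww : ‖w - F z₀‖ < m / 4 := by rw [← dist_eq_norm]; exact mem_ball.mp hw
    obtain ⟨z, hz, hfz⟩ := exists_eq_in_ball (w := w) (b := m / 2) hrpos hrD' hFd
      (fun z hz => by
        have h1 := hmin z hz
        have h2 : ‖F z - F z₀‖ ≤ ‖F z - w‖ + ‖w - F z₀‖ := norm_sub_le_norm_sub_add_norm_sub _ _ _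
        linarith)
      (by
        have : ‖F z₀ - w‖ = ‖w - F z₀‖ := norm_sub_rev _ _
        linarith)
    exact ⟨z, ⟨ball_subset_ball hrε.le hz, hrD' (ball_subset_closedBall hz)⟩, hfz⟩
  · -- eventually, f n attains every w ∈ ball (F z₀) (m/4) inside ball z₀ r
    have E1 : ∀ᶠ n in atTop, closedBall z₀ r ⊆ D n :=
      hcara1 _ (isCompact_closedBall z₀ r) hrD'
    have E2 : ∀ᶠ n in atTop, ∀ z ∈ closedBall z₀ r, dist (F z) (f n z) < m / 4 := by
      have := (tendstoLocallyUniformlyOn_iff_forall_isCompact hD'open).mp hconv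
        (closedBall z₀ r) hrD' (isCompact_closedBall z₀ r)
      exact (Metric.tendstoUniformlyOn_iff.mp this) (m / 4) (by linarith)
    filter_upwards [E1, E2] with n h1 h2
    intro w hw
    have hww : ‖w - F z₀‖ < m / 4 := by rw [← dist_eq_norm]; exact mem_ball.mp hw
    obtain ⟨z, hz, hfz⟩ := exists_eq_in_ball (w := w) (b := m / 2) hrpos h1 (hf n)
      (fun z hz => by
        have h3 := hmin z hz
        have h4 : dist (F z) (f n z) < m / 4 := h2 z (hsphsub hz)
        rw [dist_eq_norm] at h4
        have h5 : ‖F z - F z₀‖ ≤ ‖F z - f n z‖ + ‖f n z - w‖ + ‖w - F z₀‖ := by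
          calc ‖F z - F z₀‖ = ‖(F z - f n z) + (f n z - w) + (w - F z₀)‖ := by ring_nf
            _ ≤ _ := by
              refine le_trans (norm_add_le _ _) ?_
              gcongr
              exact norm_add_le _ _
        linarith)
      (by
        have h4 : dist (F z₀) (f n z₀) < m / 4 := h2 z₀ (mem_closedBall_self hrpos.le)
        rw [dist_eq_norm] at h4
        have h5 : ‖f n z₀ - w‖ ≤ ‖f n z₀ - F z₀‖ + ‖F z₀ - w‖ :=
          norm_sub_le_norm_sub_add_norm_sub _ _ _
        have h6 : ‖f n z₀ - F z₀‖ = ‖F z₀ - f n z₀‖ := norm_sub_rev _ _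
        have h7 : ‖F z₀ - w‖ = ‖w - F z₀‖ := norm_sub_rev _ _
        linarith)
    exact ⟨z, ⟨ball_subset_ball hrε.le hz, h1 (ball_subset_closedBall hz)⟩, hfz⟩

/-- Let domains `D n → D` in the Carathéodory sense and let `f n : D n → ℂ` be conformal
(injective analytic) maps converging locally uniformly on `D` to a nonconstant (hence
conformal) map `F`. Then every compact subset of `F(D)` is contained in `f n (D n)` for
all large `n`, and the inverse maps `(f n)⁻¹` converge locally uniformly to `F⁻¹` on
`F(D)`. -/
theorem cara_limit_inverse_convergence
    (D : ℕ → Set ℂ) (D' : Set ℂ)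
    (hDopen : ∀ n, IsOpen (D n)) (hDconn : ∀ n, IsConnected (D n))
    (hD'open : IsOpen D') (hD'conn : IsConnected D')
    (hcara : CaraTendsto D D')
    (f : ℕ → ℂ → ℂ) (F : ℂ → ℂ)
    (hf : ∀ n, DifferentiableOn ℂ (f n) (D n))
    (hinj : ∀ n, InjOn (f n) (D n))
    (hconv : TendstoLocallyUniformlyOn f F atTop D')
    (hnc : ¬ ∃ c : ℂ, EqOn F (Function.const ℂ c) D') :
    (∀ K : Set ℂ, IsCompact K → K ⊆ F '' D' → ∀ᶠ n in atTop, K ⊆ f n '' (D n)) ∧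
    TendstoLocallyUniformlyOn (fun n => Function.invFunOn (f n) (D n))
      (Function.invFunOn F D') atTop (F '' D') := by
  obtain ⟨hcara1, -⟩ := hcara
  -- F is differentiable on D'
  have hFd : DifferentiableOn ℂ F D' := by
    intro z hz
    obtain ⟨ρ, hρ, hball⟩ := Metric.isOpen_iff.mp hD'open z hz
    have hsub : closedBall z (ρ/2) ⊆ D' := fun x hx =>
      hball (mem_ball.mpr (lt_of_le_of_lt (mem_closedBall.mp hx) (by linarith)))
    have hev : ∀ᶠ n in atTop, DifferentiableOn ℂ (f n) (ball z (ρ/2)) :=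
      (hcara1 _ (isCompact_closedBall z (ρ/2)) hsub).mono
        (fun n hn => (hf n).mono (ball_subset_closedBall.trans hn))
    have hd := (hconv.mono (ball_subset_closedBall.trans hsub)).differentiableOn hev isOpen_ball
    exact ((hd z (mem_ball_self (by linarith))).differentiableAt
      (isOpen_ball.mem_nhds (mem_ball_self (by linarith)))).differentiableWithinAt
  -- F is injective on D'
  have hFinj : InjOn F D' := by
    intro z₁ h₁ z₂ h₂ heq
    by_contra hne
    have hd : 0 < dist z₁ z₂ := dist_pos.mpr hne
    obtain ⟨δ₁, hδ₁, -, E1⟩ := key_ball D D' hD'open hD'conn hcara1 f F hf hconv hnc hFd h₁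
      (half_pos hd)
    obtain ⟨δ₂, hδ₂, -, E2⟩ := key_ball D D' hD'open hD'conn hcara1 f F hf hconv hnc hFd h₂
      (half_pos hd)
    obtain ⟨n, hn1, hn2⟩ := (E1.and E2).exists
    obtain ⟨za, ⟨hza, hzaD⟩, hfa⟩ := hn1 (F z₁) (mem_ball_self hδ₁)
    obtain ⟨zb, ⟨hzb, hzbD⟩, hfb⟩ := hn2 (F z₁) (by rw [heq]; exact mem_ball_self hδ₂)
    have : za = zb := hinj n hzaD hzbD (by rw [hfa, hfb])
    rw [mem_ball] at hza hzb
    have h3 := dist_triangle z₁ za z₂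
    rw [this, dist_comm zb z₁] at hza
    rw [this] at h3
    linarith
  -- part 1
  have part1 : ∀ K : Set ℂ, IsCompact K → K ⊆ F '' D' → ∀ᶠ n in atTop, K ⊆ f n '' (D n) := by
    intro K hK hKF
    have hloc : ∀ w ∈ K, ∃ δ > 0, ∀ᶠ n in atTop, ball w δ ⊆ f n '' (D n) := by
      intro w hw
      obtain ⟨z₀, hz₀, rfl⟩ := hKF hw
      obtain ⟨δ, hδ, -, hev⟩ := key_ball D D' hD'open hD'conn hcara1 f F hf hconv hnc hFd hz₀
        one_pos
      refine ⟨δ, hδ, hev.mono fun n hn w' hw' => ?_⟩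
      obtain ⟨z, ⟨-, hzD⟩, hfz⟩ := hn w' hw'
      exact ⟨z, hzD, hfz⟩
    choose! δ hδpos hδev using hloc
    obtain ⟨t, htK, htcov⟩ := hK.elim_nhds_subcover (fun w => ball w (δ w))
      (fun w hw => ball_mem_nhds w (hδpos w hw))
    have E : ∀ᶠ n in atTop, ∀ w ∈ t, ball w (δ w) ⊆ f n '' (D n) :=
      (eventually_all_finite t.finite_toSet).mpr fun w hw => hδev w (htK w hw)
    filter_upwards [E] with n hn w hw
    obtain ⟨w₀, hw₀t, hball⟩ := mem_iUnion₂.mp (htcov hw)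
    exact hn w₀ hw₀t hball
  refine ⟨part1, ?_⟩
  -- F '' D' is open
  have hopen : IsOpen (F '' D') := by
    rw [Metric.isOpen_iff]
    rintro w ⟨z₀, hz₀, rfl⟩
    obtain ⟨δ, hδ, hFball, -⟩ := key_ball D D' hD'open hD'conn hcara1 f F hf hconv hnc hFd hz₀
      one_pos
    refine ⟨δ, hδ, fun w' hw' => ?_⟩
    obtain ⟨z, ⟨-, hzD⟩, hFz⟩ := hFball w' hw'
    exact ⟨z, hzD, hFz⟩
  rw [tendstoLocallyUniformlyOn_iff_forall_isCompact hopen]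
  intro L hLsub hL
  rw [Metric.tendstoUniformlyOn_iff]
  intro ε hε
  have hloc : ∀ w₀ ∈ L, ∃ δ > 0, ∀ᶠ n in atTop, ∀ w ∈ ball w₀ δ,
      dist (Function.invFunOn F D' w) (Function.invFunOn (f n) (D n) w) < ε := by
    intro w₀ hw₀
    obtain ⟨z₀, hz₀, rfl⟩ := hLsub hw₀
    obtain ⟨δ, hδ, hFball, hev⟩ := key_ball D D' hD'open hD'conn hcara1 f F hf hconv hnc hFd hz₀
      (half_pos hε)
    refine ⟨δ, hδ, hev.mono fun n hn w hw => ?_⟩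
    obtain ⟨z, ⟨hz, hzD⟩, hfz⟩ := hn w hw
    obtain ⟨z', ⟨hz', hz'D⟩, hFz'⟩ := hFball w hw
    have hgn : Function.invFunOn (f n) (D n) w = z := by
      have hmem : Function.invFunOn (f n) (D n) w ∈ D n := Function.invFunOn_mem ⟨z, hzD, hfz⟩
      have heq : f n (Function.invFunOn (f n) (D n) w) = w := Function.invFunOn_eq ⟨z, hzD, hfz⟩
      exact hinj n hmem hzD (by rw [heq, hfz])
    have hG : Function.invFunOn F D' w = z' := by
      have hmem : Function.invFunOn F D' w ∈ D' := Function.invFunOn_mem ⟨z', hz'D, hFz'⟩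
      have heq : F (Function.invFunOn F D' w) = w := Function.invFunOn_eq ⟨z', hz'D, hFz'⟩
      exact hFinj hmem hz'D (by rw [heq, hFz'])
    rw [hgn, hG, mem_ball] at *
    calc dist z' z ≤ dist z' z₀ + dist z₀ z := dist_triangle _ _ _
      _ < ε / 2 + ε / 2 := by rw [dist_comm z₀ z]; exact add_lt_add hz' hz
      _ = ε := by ring
  choose! δ hδpos hδev using hloc
  obtain ⟨t, htL, htcov⟩ := hL.elim_nhds_subcover (fun w => ball w (δ w))
    (fun w hw => ball_mem_nhds w (hδpos w hw))
  have E : ∀ᶠ n in atTop, ∀ w₀ ∈ t, ∀ w ∈ ball w₀ (δ w₀),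
      dist (Function.invFunOn F D' w) (Function.invFunOn (f n) (D n) w) < ε :=
    (eventually_all_finite t.finite_toSet).mpr fun w₀ hw₀ => hδev w₀ (htL w₀ hw₀)
  filter_upwards [E] with n hn w hw
  obtain ⟨w₀, hw₀t, hball⟩ := mem_iUnion₂.mp (htcov hw)
  exact hn w₀ hw₀t w hball
end
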